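/- Fix p with 0 < p < 1/2 and define ρ_k by ρ_0 = 1 and ρ_{k+1} = 2p·ρ_k − (p·ρ_k)². Then for all n and all k with 1 ≤ k ≤ n, α^{(n)}_k ≤ p·ρ_k/(1 − 2p), where α^{(n)}_k = (1−p)·p·Σ_{i=0}^{n−1−k} (1−p)^i · ρ_{k+i} · ∏_{j=0}^{i−1} (1 − p·ρ_{k+j}). -/

import Mathlib

open Filter Finset

/-- The recursion `ρ₀ = 1`, `ρ_{k+1} = 2 p ρ_k - (p ρ_k)²`. -/
noncomputable def rho (p : ℝ) : ℕ → ℝ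
  | 0 => 1
  | k + 1 => 2 * p * rho p k - (p * rho p k) ^ 2

/-- `α^{(n)}_k`, the probability that water reaches a level-`k` vertex from below. -/
noncomputable def alpha (p : ℝ) (n k : ℕ) : ℝ :=
  (1 - p) * p * ∑ i ∈ Finset.range (n - k),
    (1 - p) ^ i * rho p (k + i) * ∏ j ∈ Finset.range i, (1 - p * rho p (k + j))

/-! The recursion gives `ρ_{k+1} ≤ 2p ρ_k`, hence `ρ_{k+i} ≤ (2p)^i ρ_k`, while every other factor
of a term of `α^{(n)}_k` lies in `[0, 1]`. So `α^{(n)}_k ≤ p ρ_k ∑ (2p)^i ≤ p ρ_k / (1 - 2p)`. -/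

lemma rho_succ_le (p : ℝ) (k : ℕ) : rho p (k + 1) ≤ 2 * p * rho p k := by
  have := sq_nonneg (p * rho p k)
  simp only [rho]
  linarith

lemma rho_add_le (p : ℝ) (hp : 0 ≤ p) (k i : ℕ) : rho p (k + i) ≤ (2 * p) ^ i * rho p k := by
  induction i with
  | zero => simp
  | succ i ih =>
    calc rho p (k + i + 1) ≤ 2 * p * rho p (k + i) := rho_succ_le p (k + i)
      _ ≤ 2 * p * ((2 * p) ^ i * rho p k) := by gcongr
      _ = (2 * p) ^ (i + 1) * rho p k := by ring

lemma rho_mem_Icc (p : ℝ) (hp0 : 0 ≤ p) (hp1 : p ≤ 1) (k : ℕ) : rho p k ∈ Set.Icc 0 1 := by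
  induction k with
  | zero => simp [rho]
  | succ k ih =>
    obtain ⟨h0, h1⟩ := ih
    have hpr0 : 0 ≤ p * rho p k := mul_nonneg hp0 h0
    have hpr1 : p * rho p k ≤ 1 := mul_le_one₀ hp1 h0 h1
    have hsucc : rho p (k + 1) = 1 - (1 - p * rho p k) ^ 2 := by simp only [rho]; ring
    rw [hsucc]
    constructor <;> nlinarith

lemma alpha_le_mul_sum_rho (p : ℝ) (hp0 : 0 ≤ p) (hp1 : p ≤ 1) (n k : ℕ) :
    alpha p n k ≤ p * ∑ i ∈ range (n - k), rho p (k + i) := by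
  have hρ := rho_mem_Icc p hp0 hp1
  have hfactor : ∀ j, 1 - p * rho p (k + j) ∈ Set.Icc 0 1 := fun j => by
    obtain ⟨h0, h1⟩ := hρ (k + j)
    constructor <;> nlinarith
  have hterm : ∀ i ∈ range (n - k), (1 - p) ^ i * rho p (k + i) *
      ∏ j ∈ range i, (1 - p * rho p (k + j)) ≤ rho p (k + i) := fun i _ => by
    have hpow : (1 - p) ^ i ≤ 1 := pow_le_one₀ (by linarith) (by linarith)
    have hprod : ∏ j ∈ range i, (1 - p * rho p (k + j)) ≤ 1 :=
      prod_le_one (fun j _ => (hfactor j).1) (fun j _ => (hfactor j).2)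
    calc (1 - p) ^ i * rho p (k + i) * ∏ j ∈ range i, (1 - p * rho p (k + j))
        ≤ 1 * rho p (k + i) * 1 := by
          have := (hρ (k + i)).1
          gcongr
          exact prod_nonneg fun j _ => (hfactor j).1
      _ = rho p (k + i) := by ring
  have hsum_nonneg : 0 ≤ ∑ i ∈ range (n - k), (1 - p) ^ i * rho p (k + i) *
      ∏ j ∈ range i, (1 - p * rho p (k + j)) := sum_nonneg fun i _ =>
    mul_nonneg (mul_nonneg (pow_nonneg (by linarith) i) (hρ (k + i)).1)
      (prod_nonneg fun j _ => (hfactor j).1)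
  unfold alpha
  calc (1 - p) * p * _ ≤ p * ∑ i ∈ range (n - k), (1 - p) ^ i * rho p (k + i) *
        ∏ j ∈ range i, (1 - p * rho p (k + j)) := by
        rw [mul_assoc]
        exact mul_le_of_le_one_left (mul_nonneg hp0 hsum_nonneg) (by linarith)
    _ ≤ p * ∑ i ∈ range (n - k), rho p (k + i) := by gcongr with i hi; exact hterm i hi

lemma sum_rho_le (p : ℝ) (hp0 : 0 ≤ p) (hp1 : p < 1 / 2) (k m : ℕ) :
    ∑ i ∈ range m, rho p (k + i) ≤ rho p k / (1 - 2 * p) := by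
  have hρ : 0 ≤ rho p k := (rho_mem_Icc p hp0 (by linarith) k).1
  calc ∑ i ∈ range m, rho p (k + i) ≤ ∑ i ∈ range m, (2 * p) ^ i * rho p k :=
        sum_le_sum fun i _ => rho_add_le p hp0 k i
    _ = (∑ i ∈ range m, (2 * p) ^ i) * rho p k := by rw [sum_mul]
    _ ≤ (1 - 2 * p)⁻¹ * rho p k := by
        gcongr
        have := geom_sum_Ico_le_of_lt_one (m := 0) (n := m) (x := 2 * p) (by linarith) (by linarith)
        rwa [← range_eq_Ico, pow_zero, one_div] at this
    _ = rho p k / (1 - 2 * p) := by rw [div_eq_inv_mul]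

theorem alpha_le_general (p : ℝ) (hp0 : 0 < p) (hp1 : p < 1 / 2)
    (n k : ℕ) :
    alpha p n k ≤ p * rho p k / (1 - 2 * p) := by
  calc alpha p n k ≤ p * ∑ i ∈ range (n - k), rho p (k + i) :=
        alpha_le_mul_sum_rho p hp0.le (by linarith) n k
    _ ≤ p * (rho p k / (1 - 2 * p)) := by gcongr; exact sum_rho_le p hp0.le hp1 k (n - k)
    _ = p * rho p k / (1 - 2 * p) := by ring

/-- **Bound on `α^{(n)}_k`.**  For `0 < p < 1/2` and `1 ≤ k ≤ n`,
`α^{(n)}_k ≤ p ρ_k / (1 - 2p)`. -/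
theorem alpha_le (p : ℝ) (hp0 : 0 < p) (hp1 : p < 1 / 2)
    (n k : ℕ) (hk1 : 1 ≤ k) (hkn : k ≤ n) :
    alpha p n k ≤ p * rho p k / (1 - 2 * p) :=
  alpha_le_general p hp0 hp1 n k
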